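/- Let A ∈ ℝ^{m×n} and suppose Aᵀ = Q R Zᵀ with Q ∈ ℝ^{n×k} having orthonormal columns, R = [R₁ | R₂] with R₁ ∈ ℝ^{k×k} invertible and R₂ = R₁ C for some C ∈ ℝ^{k×(m−k)}, and Z ∈ ℝ^{m×m} a permutation matrix whose first k columns select the index set ℐ. Then A = P A(ℐ,:) exactly, where P = Z [I_k | C]ᵀ. -/

import Mathlib

open Matrix

noncomputable def frobNorm {m n : ℕ} (A : Matrix (Fin m) (Fin n) ℝ) : ℝ :=
  Real.sqrt (∑ i, ∑ j, (A i j) ^ 2)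

noncomputable def specNorm {m n : ℕ} (A : Matrix (Fin m) (Fin n) ℝ) : ℝ :=
  ‖(LinearMap.toContinuousLinearMap (Matrix.toEuclideanLin A))‖

noncomputable def lamMax {m : ℕ} (S : Matrix (Fin m) (Fin m) ℝ) (hS : S.IsHermitian) : ℝ :=
  ⨆ i, hS.eigenvalues i

/-! Writing `B = (Q R₁)ᵀ`, the hypothesis says that `A` is the row permutation `Z` of
`[I | C]ᵀ B`. Its rows indexed by `ℐ` are the identity block applied to `B`, i.e. `A(ℐ,:) = B`,
so `A = Z [I | C]ᵀ A(ℐ,:)`. -/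

namespace Matrix

variable {m n k l R : Type*} [Fintype k] [DecidableEq k]

section Semiring

variable [Semiring R]

theorem submatrix_symm_inl_of_eq_fromRows_one_mul {A : Matrix m n R} {D : Matrix l k R}
    {B : Matrix k n R} {z : m ≃ k ⊕ l} (hA : A = (fromRows 1 D * B).submatrix z id) :
    A.submatrix (fun i => z.symm (Sum.inl i)) id = B := by
  ext i j
  simp [hA, fromRows_mul]

theorem eq_mul_submatrix_of_eq_fromRows_one_mul {A : Matrix m n R} {D : Matrix l k R}
    {B : Matrix k n R} {z : m ≃ k ⊕ l} (hA : A = (fromRows 1 D * B).submatrix z id) :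
    A = (fromRows 1 D).submatrix z id * A.submatrix (fun i => z.symm (Sum.inl i)) id := by
  rw [submatrix_symm_inl_of_eq_fromRows_one_mul hA, hA, ← submatrix_id_id B,
    ← submatrix_mul _ _ _ _ _ Function.bijective_id, submatrix_id_id]

end Semiring

theorem eq_fromRows_one_mul_of_transpose_eq [CommSemiring R] [Fintype l] {A : Matrix m n R}
    {Q : Matrix n k R} {R₁ : Matrix k k R} {C : Matrix k l R} {z : m ≃ k ⊕ l}
    (hA : Aᵀ = (Q * fromCols R₁ (R₁ * C)).submatrix id z) :
    A = (fromRows 1 Cᵀ * (Q * R₁)ᵀ).submatrix z id := by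
  have hfactor : Q * fromCols R₁ (R₁ * C) = Q * R₁ * fromCols 1 C := by
    rw [Matrix.mul_assoc, mul_fromCols R₁, Matrix.mul_one]
  rw [← transpose_transpose A, hA, hfactor, transpose_submatrix, transpose_mul,
    transpose_fromCols, transpose_one]

end Matrix

theorem row_ID_exact_of_QR_general
    (m n k : ℕ)
    (A : Matrix (Fin m) (Fin n) ℝ)
    (Q : Matrix (Fin n) (Fin k) ℝ)
    (R1 : Matrix (Fin k) (Fin k) ℝ)
    (C : Matrix (Fin k) (Fin (m - k)) ℝ)
    (z : Fin m ≃ (Fin k ⊕ Fin (m - k)))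
    (hA : Aᵀ = (Q * Matrix.fromCols R1 (R1 * C)).submatrix id (⇑z))
    (P : Matrix (Fin m) (Fin k) ℝ)
    (hP : P = (Matrix.fromRows (1 : Matrix (Fin k) (Fin k) ℝ) Cᵀ).submatrix (⇑z) id) :
    A = P * A.submatrix (fun i : Fin k => z.symm (Sum.inl i)) id := by
  rw [hP]
  exact eq_mul_submatrix_of_eq_fromRows_one_mul (eq_fromRows_one_mul_of_transpose_eq hA)

/-- Exactness of the row ID when the trailing QR block is exactly representable:
if `Aᵀ = Q [R₁ | R₁C] Zᵀ` (column permutation encoded by `z`) with `Q` having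
orthonormal columns and `R₁` invertible, then `A = P A(ℐ,:)` exactly, where
`P = Z [I_k | C]ᵀ` and `ℐ i = z.symm (inl i)`. -/
theorem row_ID_exact_of_QR
    (m n k : ℕ) (hk : k ≤ m)
    (A : Matrix (Fin m) (Fin n) ℝ)
    (Q : Matrix (Fin n) (Fin k) ℝ) (hQ : Qᵀ * Q = 1)
    (R1 : Matrix (Fin k) (Fin k) ℝ) (hR1 : IsUnit R1.det)
    (C : Matrix (Fin k) (Fin (m - k)) ℝ)
    (z : Fin m ≃ (Fin k ⊕ Fin (m - k)))
    (hA : Aᵀ = (Q * Matrix.fromCols R1 (R1 * C)).submatrix id (⇑z))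
    (P : Matrix (Fin m) (Fin k) ℝ)
    (hP : P = (Matrix.fromRows (1 : Matrix (Fin k) (Fin k) ℝ) Cᵀ).submatrix (⇑z) id) :
    A = P * A.submatrix (fun i : Fin k => z.symm (Sum.inl i)) id :=
  row_ID_exact_of_QR_general m n k A Q R1 C z hA P hP
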